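/- Let n ≥ 1 and let F be a subset of a De Morgan lattice L. Then F is a classical upset of L if and only if there exist a Boolean algebra B, a surjective lattice homomorphism h : L → B satisfying h(¬x) = (h x)ᶜ for all x ∈ L, and a nonempty proper upset G of B with F = h⁻¹(G). Moreover, F is a classical n-filter on L if and only if such B, h, G exist with G additionally an n-filter on B. -/

import Mathlib

/-- A De Morgan lattice: a distributive lattice with an antitone involution. -/
class DeMorgan (L : Type*) extends DistribLattice L where
  dneg : L → L
  dneg_dneg : ∀ x : L, dneg (dneg x) = x
  dneg_sup : ∀ x y : L, dneg (x ⊔ y) = dneg x ⊓ dneg y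

prefix:max "∼" => DeMorgan.dneg

section Defs

variable {α : Type*}

/-- An upward closed subset of a lattice. -/
def IsUpset [Lattice α] (F : Set α) : Prop :=
  ∀ ⦃x y : α⦄, x ∈ F → x ≤ y → y ∈ F

/-- A lattice filter: an upset closed under binary meets. -/
def IsLatFilter [Lattice α] (F : Set α) : Prop :=
  IsUpset F ∧ ∀ x y : α, x ∈ F → y ∈ F → x ⊓ y ∈ F

/-- An `n`-filter: an upset such that for every nonempty finite `Y`, if the meet of
every nonempty subset of `Y` of size at most `n` lies in `F`, then so does the meet of `Y`. -/
def IsNFilter [Lattice α] (n : ℕ) (F : Set α) : Prop :=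
  IsUpset F ∧ ∀ (Y : Finset α) (hY : Y.Nonempty),
    (∀ (X : Finset α) (hX : X.Nonempty), X ⊆ Y → X.card ≤ n → X.inf' hX id ∈ F) →
    Y.inf' hY id ∈ F

/-- A prime upset: `x ⊔ y ∈ F` implies `x ∈ F` or `y ∈ F`. -/
def IsPrimeUpset [Lattice α] (F : Set α) : Prop :=
  ∀ x y : α, x ⊔ y ∈ F → x ∈ F ∨ y ∈ F

/-- A downward closed subset of a lattice. -/
def IsDownset [Lattice α] (I : Set α) : Prop :=
  ∀ ⦃x y : α⦄, x ∈ I → y ≤ x → y ∈ I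

/-- A lattice ideal: a downset closed under binary joins. -/
def IsIdeal [Lattice α] (I : Set α) : Prop :=
  IsDownset I ∧ ∀ x y : α, x ∈ I → y ∈ I → x ⊔ y ∈ I

/-- An `n`-ideal: the order dual notion of an `n`-filter. -/
def IsNIdeal [Lattice α] (n : ℕ) (I : Set α) : Prop :=
  IsDownset I ∧ ∀ (Y : Finset α) (hY : Y.Nonempty),
    (∀ (X : Finset α) (hX : X.Nonempty), X ⊆ Y → X.card ≤ n → X.sup' hX id ∈ I) →
    Y.sup' hY id ∈ I

variable {L : Type*} [DeMorgan L]

/-- Almost complete upset: `x ∈ F` implies `x ⊓ (y ⊔ ∼y) ∈ F`. -/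
def AlmostComplete (F : Set L) : Prop := ∀ x ∈ F, ∀ y : L, x ⊓ (y ⊔ ∼y) ∈ F

/-- Complete upset: almost complete and nonempty. -/
def IsCompleteUpset (F : Set L) : Prop := AlmostComplete F ∧ F.Nonempty

/-- Almost consistent upset: `(x ⊓ ∼x) ⊔ y ∈ F` implies `y ∈ F`. -/
def AlmostConsistent (F : Set L) : Prop := ∀ x y : L, (x ⊓ ∼x) ⊔ y ∈ F → y ∈ F

/-- Consistent upset: almost consistent and not total. -/
def IsConsistentUpset (F : Set L) : Prop := AlmostConsistent F ∧ F ≠ Set.univ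

/-- Classical upset: complete and consistent. -/
def IsClassicalUpset (F : Set L) : Prop := IsCompleteUpset F ∧ IsConsistentUpset F

/-- Kalman upset. -/
def IsKalmanUpset (F : Set L) : Prop :=
  ∀ x y z u : L, ((x ⊓ ∼x) ⊓ z) ⊔ u ∈ F → ((y ⊔ ∼y) ⊓ z) ⊔ u ∈ F

/-- A homomorphism of De Morgan lattices. -/
def IsDMHom {L M : Type*} [DeMorgan L] [DeMorgan M] (h : L → M) : Prop :=
  (∀ x y : L, h (x ⊓ y) = h x ⊓ h y) ∧ (∀ x y : L, h (x ⊔ y) = h x ⊔ h y) ∧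
    ∀ x : L, h (∼x) = ∼(h x)

/-- The filter generated by all elements of the form `x ⊔ ∼x`. -/
def Fcomp (L : Type*) [DeMorgan L] : Set L :=
  {a | ∃ (s : Finset L) (hs : s.Nonempty), s.inf' hs (fun x => x ⊔ ∼x) ≤ a}

/-- The `n`-filter generated by a set. -/
def nFilterGen (n : ℕ) (U : Set L) : Set L :=
  ⋂₀ {F : Set L | IsNFilter n F ∧ U ⊆ F}

/-- `Comp U`. -/
def CompCl (U : Set L) : Set L := {x | ∃ a ∈ U, ∃ f ∈ Fcomp L, a ⊓ f ≤ x}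

/-- `Cons U`. -/
def ConsCl (U : Set L) : Set L := {x | ∃ f ∈ Fcomp L, ∼f ⊔ x ∈ U}

/-- A congruence of De Morgan lattices, as a binary relation. -/
def IsCongruence (θ : L → L → Prop) : Prop :=
  Equivalence θ ∧
  (∀ a b c d : L, θ a b → θ c d → θ (a ⊓ c) (b ⊓ d)) ∧
  (∀ a b c d : L, θ a b → θ c d → θ (a ⊔ c) (b ⊔ d)) ∧
  ∀ a b : L, θ a b → θ (∼a) (∼b)

end Defs

/-- The four-element De Morgan lattice `DM₁` on `Bool × Bool`. -/
instance : DeMorgan (Bool × Bool) :=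
  { (inferInstance : DistribLattice (Bool × Bool)) with
    dneg := fun p => (!p.2, !p.1)
    dneg_dneg := by decide
    dneg_sup := by decide }

/-- Powers of `DM₁`, with componentwise operations. -/
instance {ι : Type*} : DeMorgan (ι → Bool × Bool) :=
  { (inferInstance : DistribLattice (ι → Bool × Bool)) with
    dneg := fun f i => ∼(f i)
    dneg_dneg := fun f => funext fun i => DeMorgan.dneg_dneg (f i)
    dneg_sup := fun f g => funext fun i => DeMorgan.dneg_sup (f i) (g i) }

universe u


/-!
Quotient `L` by the preorder `a ≼ b :↔ a ⊓ f ≤ b ⊔ ∼f` for some `f` in the filter `Fcomp L`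
generated by the elements `x ⊔ ∼x`. This sends every `x ⊔ ∼x` to `⊤` and every `x ⊓ ∼x` to `⊥`,
so the quotient is a Boolean algebra and the quotient map turns `∼` into complement. Almost
completeness and almost consistency say exactly that a classical upset is saturated for `≼`,
hence it is the preimage of its image; conversely, preimages of nonempty proper upsets of a
Boolean algebra are visibly classical. `n`-filters transfer in both directions along surjective
meet-homomorphisms, since finite meets commute with taking images.
-/

namespace DeMorgan

variable {L : Type*} [DeMorgan L]

lemma dneg_inf (x y : L) : ∼(x ⊓ y) = ∼x ⊔ ∼y := by
  rw [← dneg_dneg (∼x ⊔ ∼y), dneg_sup, dneg_dneg, dneg_dneg]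

lemma dneg_le_dneg {x y : L} (h : x ≤ y) : ∼y ≤ ∼x := by
  rw [← sup_eq_right.mpr h, dneg_sup]
  exact inf_le_left

end DeMorgan

open DeMorgan

section Fcomp

variable {L : Type*} [DeMorgan L]

lemma sup_dneg_mem_Fcomp (x : L) : x ⊔ ∼x ∈ Fcomp L :=
  ⟨{x}, Finset.singleton_nonempty x, by simp⟩

lemma isLatFilter_Fcomp : IsLatFilter (Fcomp L) := by
  classical
  refine ⟨fun a b ⟨s, hs, hsa⟩ hab => ⟨s, hs, hsa.trans hab⟩, ?_⟩
  rintro a b ⟨s, hs, hsa⟩ ⟨t, ht, htb⟩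
  exact ⟨s ∪ t, hs.mono Finset.subset_union_left,
    le_inf ((Finset.inf'_mono _ Finset.subset_union_left hs).trans hsa)
      ((Finset.inf'_mono _ Finset.subset_union_right ht).trans htb)⟩

lemma Fcomp_subset_of_isLatFilter {S : Set L} (hS : IsLatFilter S)
    (hgen : ∀ x, x ⊔ ∼x ∈ S) : Fcomp L ⊆ S := by
  rintro a ⟨s, hs, hsa⟩
  exact hS.1 (Finset.inf'_induction hs _ (fun x hx y hy => hS.2 x y hx hy) fun x _ => hgen x)
    hsa

variable {F : Set L}

lemma AlmostComplete.inf_mem (hup : IsUpset F) (hF : AlmostComplete F) {a f : L}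
    (ha : a ∈ F) (hf : f ∈ Fcomp L) : a ⊓ f ∈ F := by
  refine Fcomp_subset_of_isLatFilter (S := {f | ∀ a ∈ F, a ⊓ f ∈ F}) ⟨?_, ?_⟩
    (fun x a ha => hF a ha x) hf a ha
  · exact fun f g hf hfg a ha => hup (hf a ha) (inf_le_inf_left a hfg)
  · exact fun f g hf hg a ha => inf_assoc a f g ▸ hg _ (hf a ha)

lemma AlmostConsistent.mem_of_sup_dneg_mem (hup : IsUpset F) (hF : AlmostConsistent F)
    {b f : L} (hb : b ⊔ ∼f ∈ F) (hf : f ∈ Fcomp L) : b ∈ F := by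
  refine Fcomp_subset_of_isLatFilter (S := {f | ∀ b, b ⊔ ∼f ∈ F → b ∈ F}) ⟨?_, ?_⟩ ?_
    hf b hb
  · exact fun f g hf hfg b hb => hf b (hup hb (sup_le_sup_left (dneg_le_dneg hfg) b))
  · intro f g hf hg b hb
    rw [dneg_inf, ← sup_assoc] at hb
    exact hf b (hg _ hb)
  · intro x b hb
    rw [dneg_sup, sup_comm] at hb
    exact hF (∼x) b hb

end Fcomp

namespace BooleanQuotient

variable {L : Type*} [DeMorgan L]

def BoolLE (a b : L) : Prop := ∃ f ∈ Fcomp L, a ⊓ f ≤ b ⊔ ∼f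

lemma boolLE_of_le {a b : L} (h : a ≤ b) : BoolLE a b :=
  ⟨a ⊔ ∼a, sup_dneg_mem_Fcomp a, inf_le_left.trans (h.trans le_sup_left)⟩

lemma boolLE_sup_dneg (a x : L) : BoolLE a (x ⊔ ∼x) :=
  ⟨x ⊔ ∼x, sup_dneg_mem_Fcomp x, inf_le_right.trans le_sup_left⟩

lemma boolLE_inf_dneg (x a : L) : BoolLE (x ⊓ ∼x) a := by
  refine ⟨∼x ⊔ ∼∼x, sup_dneg_mem_Fcomp (∼x), inf_le_left.trans ?_⟩
  rw [dneg_sup, dneg_dneg]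
  exact le_sup_right

lemma BoolLE.exists_common {a b c d : L} (h₁ : BoolLE a b) (h₂ : BoolLE c d) :
    ∃ f ∈ Fcomp L, a ⊓ f ≤ b ⊔ ∼f ∧ c ⊓ f ≤ d ⊔ ∼f := by
  obtain ⟨f, hf, h₁⟩ := h₁
  obtain ⟨g, hg, h₂⟩ := h₂
  refine ⟨f ⊓ g, isLatFilter_Fcomp.2 f g hf hg, ?_, ?_⟩
  · calc a ⊓ (f ⊓ g) ≤ a ⊓ f := inf_le_inf_left a inf_le_left
      _ ≤ b ⊔ ∼f := h₁
      _ ≤ b ⊔ ∼(f ⊓ g) := sup_le_sup_left (dneg_le_dneg inf_le_left) b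
  · calc c ⊓ (f ⊓ g) ≤ c ⊓ g := inf_le_inf_left c inf_le_right
      _ ≤ d ⊔ ∼g := h₂
      _ ≤ d ⊔ ∼(f ⊓ g) := sup_le_sup_left (dneg_le_dneg inf_le_right) d

lemma BoolLE.trans {a b c : L} (h₁ : BoolLE a b) (h₂ : BoolLE b c) : BoolLE a c := by
  obtain ⟨f, hf, h₁, h₂⟩ := h₁.exists_common h₂
  refine ⟨f, hf, ?_⟩
  calc a ⊓ f ≤ (b ⊔ ∼f) ⊓ f := le_inf h₁ inf_le_right
    _ = b ⊓ f ⊔ ∼f ⊓ f := inf_sup_right b (∼f) f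
    _ ≤ c ⊔ ∼f := sup_le h₂ (inf_le_left.trans le_sup_right)

lemma BoolLE.sup {a b c d : L} (h₁ : BoolLE a b) (h₂ : BoolLE c d) :
    BoolLE (a ⊔ c) (b ⊔ d) := by
  obtain ⟨f, hf, h₁, h₂⟩ := h₁.exists_common h₂
  refine ⟨f, hf, ?_⟩
  calc (a ⊔ c) ⊓ f = a ⊓ f ⊔ c ⊓ f := inf_sup_right a c f
    _ ≤ (b ⊔ ∼f) ⊔ (d ⊔ ∼f) := sup_le_sup h₁ h₂
    _ = b ⊔ d ⊔ ∼f := by rw [sup_sup_sup_comm, sup_idem]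

lemma BoolLE.inf {a b c d : L} (h₁ : BoolLE a b) (h₂ : BoolLE c d) :
    BoolLE (a ⊓ c) (b ⊓ d) := by
  obtain ⟨f, hf, h₁, h₂⟩ := h₁.exists_common h₂
  refine ⟨f, hf, ?_⟩
  calc a ⊓ c ⊓ f = (a ⊓ f) ⊓ (c ⊓ f) := by rw [inf_inf_inf_comm, inf_idem]
    _ ≤ (b ⊔ ∼f) ⊓ (d ⊔ ∼f) := inf_le_inf h₁ h₂
    _ = b ⊓ d ⊔ ∼f := (sup_inf_right b d (∼f)).symm

lemma BoolLE.dneg {a b : L} (h : BoolLE a b) : BoolLE (∼b) (∼a) := by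
  obtain ⟨f, hf, h⟩ := h
  refine ⟨f, hf, ?_⟩
  simpa only [dneg_sup, dneg_inf, dneg_dneg] using dneg_le_dneg h

def boolSetoid (L : Type*) [DeMorgan L] : Setoid L where
  r a b := BoolLE a b ∧ BoolLE b a
  iseqv := ⟨fun _ => ⟨boolLE_of_le le_rfl, boolLE_of_le le_rfl⟩, fun h => ⟨h.2, h.1⟩,
    fun h₁ h₂ => ⟨h₁.1.trans h₂.1, h₂.2.trans h₁.2⟩⟩

end BooleanQuotient

open BooleanQuotient

def BooleanQuotient (L : Type*) [DeMorgan L] : Type _ := Quotient (boolSetoid L)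

namespace BooleanQuotient

variable {L : Type*} [DeMorgan L]

def mk (a : L) : BooleanQuotient L := Quotient.mk (boolSetoid L) a

lemma mk_surjective : Function.Surjective (mk (L := L)) :=
  Quotient.mk_surjective

instance : PartialOrder (BooleanQuotient L) where
  le := Quotient.lift₂ BoolLE fun _ _ _ _ ha hb =>
    propext ⟨fun h => (ha.2.trans h).trans hb.1, fun h => (ha.1.trans h).trans hb.2⟩
  le_refl q := Quotient.inductionOn q fun _ => boolLE_of_le le_rfl
  le_trans q r s := Quotient.inductionOn₃ q r s fun _ _ _ => BoolLE.trans
  le_antisymm q r := Quotient.inductionOn₂ q r fun _ _ h₁ h₂ => Quotient.sound ⟨h₁, h₂⟩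

instance : DistribLattice (BooleanQuotient L) where
  sup := Quotient.map₂ (· ⊔ ·) fun _ _ ha _ _ hb => ⟨ha.1.sup hb.1, ha.2.sup hb.2⟩
  le_sup_left q r := Quotient.inductionOn₂ q r fun _ _ => boolLE_of_le le_sup_left
  le_sup_right q r := Quotient.inductionOn₂ q r fun _ _ => boolLE_of_le le_sup_right
  sup_le q r s := Quotient.inductionOn₃ q r s fun _ _ c h₁ h₂ =>
    (h₁.sup h₂).trans (boolLE_of_le (sup_idem c).le)
  inf := Quotient.map₂ (· ⊓ ·) fun _ _ ha _ _ hb => ⟨ha.1.inf hb.1, ha.2.inf hb.2⟩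
  inf_le_left q r := Quotient.inductionOn₂ q r fun _ _ => boolLE_of_le inf_le_left
  inf_le_right q r := Quotient.inductionOn₂ q r fun _ _ => boolLE_of_le inf_le_right
  le_inf q r s := Quotient.inductionOn₃ q r s fun a _ _ h₁ h₂ =>
    (boolLE_of_le (inf_idem a).ge).trans (h₁.inf h₂)
  le_sup_inf q r s := Quotient.inductionOn₃ q r s fun _ _ _ => boolLE_of_le le_sup_inf

noncomputable instance [Nonempty L] : BooleanAlgebra (BooleanQuotient L) where
  compl := Quotient.map (∼·) fun _ _ h => ⟨h.2.dneg, h.1.dneg⟩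
  top := mk (Classical.arbitrary L ⊔ ∼(Classical.arbitrary L))
  bot := mk (Classical.arbitrary L ⊓ ∼(Classical.arbitrary L))
  le_top q := Quotient.inductionOn q fun a => boolLE_sup_dneg a _
  bot_le q := Quotient.inductionOn q fun a => boolLE_inf_dneg _ a
  inf_compl_le_bot q := Quotient.inductionOn q fun a => boolLE_inf_dneg a _
  top_le_sup_compl q := Quotient.inductionOn q fun a => boolLE_sup_dneg _ a

lemma mk_inf (x y : L) : mk (x ⊓ y) = mk x ⊓ mk y := rfl

lemma mk_sup (x y : L) : mk (x ⊔ y) = mk x ⊔ mk y := rfl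

lemma mk_dneg [Nonempty L] (x : L) : mk (∼x) = (mk x)ᶜ := rfl

variable {F : Set L}

lemma mem_of_boolLE (hup : IsUpset F) (hF : IsClassicalUpset F) {a b : L} (ha : a ∈ F)
    (hab : BoolLE a b) : b ∈ F := by
  obtain ⟨f, hf, hle⟩ := hab
  exact hF.2.1.mem_of_sup_dneg_mem hup (hup (hF.1.1.inf_mem hup ha hf) hle) hf

lemma isUpset_image_mk (hup : IsUpset F) (hF : IsClassicalUpset F) : IsUpset (mk '' F) := by
  rintro _ q ⟨a, ha, rfl⟩ hle
  obtain ⟨b, rfl⟩ := mk_surjective q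
  exact ⟨b, mem_of_boolLE hup hF ha hle, rfl⟩

lemma preimage_image_mk (hup : IsUpset F) (hF : IsClassicalUpset F) : mk ⁻¹' (mk '' F) = F :=
  Set.Subset.antisymm (fun _ ⟨_, ha, hab⟩ => mem_of_boolLE hup hF ha (Quotient.exact hab).1)
    (Set.subset_preimage_image mk F)

end BooleanQuotient

lemma Finset.exists_subset_image_eq_card_eq {α β : Type*} [DecidableEq β] {f : α → β}
    {s : Finset α} {t : Finset β} (hts : t ⊆ s.image f) :
    ∃ u ⊆ s, u.image f = t ∧ u.card = t.card := by
  classical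
  induction t using Finset.induction_on with
  | empty => exact ⟨∅, Finset.empty_subset s, Finset.image_empty f, rfl⟩
  | insert b t hbt ih =>
    obtain ⟨u, hus, rfl, hcard⟩ := ih ((Finset.subset_insert b t).trans hts)
    obtain ⟨a, has, rfl⟩ := Finset.mem_image.mp (hts (Finset.mem_insert_self _ _))
    have hau : a ∉ u := fun hau => hbt (Finset.mem_image_of_mem f hau)
    refine ⟨insert a u, Finset.insert_subset has hus, Finset.image_insert f a u, ?_⟩
    rw [Finset.card_insert_of_notMem hau, Finset.card_insert_of_notMem hbt, hcard]

section Hom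

variable {α β : Type*} [Lattice α] [Lattice β] {h : α → β}

lemma monotone_of_map_inf (hinf : ∀ x y, h (x ⊓ y) = h x ⊓ h y) : Monotone h := fun x y hxy =>
  calc h x = h (x ⊓ y) := by rw [inf_eq_left.mpr hxy]
    _ ≤ h y := (hinf x y).symm ▸ inf_le_right

lemma IsUpset.preimage (hinf : ∀ x y, h (x ⊓ y) = h x ⊓ h y) {G : Set β} (hG : IsUpset G) :
    IsUpset (h ⁻¹' G) :=
  fun _ _ hx hxy => hG hx (monotone_of_map_inf hinf hxy)

lemma map_finset_inf'_id [DecidableEq β] (hinf : ∀ x y, h (x ⊓ y) = h x ⊓ h y)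
    {s : Finset α} (hs : s.Nonempty) : h (s.inf' hs id) = (s.image h).inf' (hs.image h) id :=
  (Finset.apply_inf'_eq_inf'_comp hs h hinf).trans (Finset.inf'_comp_eq_image hs id)

variable {n : ℕ}

lemma IsNFilter.preimage (hinf : ∀ x y, h (x ⊓ y) = h x ⊓ h y) {G : Set β}
    (hG : IsNFilter n G) : IsNFilter n (h ⁻¹' G) := by
  classical
  refine ⟨hG.1.preimage hinf, fun Y hY hsmall => ?_⟩
  rw [Set.mem_preimage, map_finset_inf'_id hinf hY]
  refine hG.2 _ _ fun X' hX' hX'Y hcard => ?_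
  obtain ⟨X, hXY, rfl, hXcard⟩ := Finset.exists_subset_image_eq_card_eq hX'Y
  have hX : X.Nonempty := hX'.of_image
  rw [← map_finset_inf'_id hinf hX]
  exact hsmall X hX hXY (hXcard ▸ hcard)

lemma IsNFilter.of_preimage (hsurj : Function.Surjective h)
    (hinf : ∀ x y, h (x ⊓ y) = h x ⊓ h y) {G : Set β} (hGup : IsUpset G)
    (hF : IsNFilter n (h ⁻¹' G)) : IsNFilter n G := by
  classical
  refine ⟨hGup, fun Y' hY' hsmall => ?_⟩
  obtain ⟨Y, rfl⟩ : ∃ Y : Finset α, Y.image h = Y' :=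
    ⟨Y'.image (Function.surjInv hsurj), by
      rw [Finset.image_image, (Function.rightInverse_surjInv hsurj).comp_eq_id, Finset.image_id]⟩
  have hY : Y.Nonempty := hY'.of_image
  rw [← map_finset_inf'_id hinf hY]
  refine hF.2 Y hY fun X hX hXY hcard => ?_
  rw [Set.mem_preimage, map_finset_inf'_id hinf hX]
  exact hsmall _ _ (Finset.image_subset_image hXY) (Finset.card_image_le.trans hcard)

end Hom

lemma isClassicalUpset_preimage {L B : Type*} [DeMorgan L] [BooleanAlgebra B] {h : L → B}
    (hsurj : Function.Surjective h) (hinf : ∀ x y, h (x ⊓ y) = h x ⊓ h y)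
    (hsup : ∀ x y, h (x ⊔ y) = h x ⊔ h y) (hneg : ∀ x, h (∼x) = (h x)ᶜ) {G : Set B}
    (hne : G.Nonempty) (hproper : G ≠ Set.univ) : IsClassicalUpset (h ⁻¹' G) := by
  refine ⟨⟨fun x hx y => ?_, hne.preimage hsurj⟩, fun x y hxy => ?_, ?_⟩
  · rwa [Set.mem_preimage, hinf, hsup, hneg, sup_compl_eq_top, inf_top_eq]
  · rwa [Set.mem_preimage, hsup, hinf, hneg, inf_compl_eq_bot, bot_sup_eq] at hxy
  · rwa [Ne, Set.preimage_eq_univ_iff, hsurj.range_eq, Set.univ_subset_iff]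

open BooleanQuotient in
theorem statement10_general {L : Type u} [DeMorgan L] (n : ℕ)
    (F : Set L) :
    ((IsUpset F ∧ IsClassicalUpset F) ↔
      ∃ (B : Type u) (_ : BooleanAlgebra B) (h : L → B) (G : Set B),
        Function.Surjective h ∧
        (∀ x y : L, h (x ⊓ y) = h x ⊓ h y) ∧
        (∀ x y : L, h (x ⊔ y) = h x ⊔ h y) ∧
        (∀ x : L, h (∼x) = (h x)ᶜ) ∧
        IsUpset G ∧ G.Nonempty ∧ G ≠ Set.univ ∧ F = h ⁻¹' G) ∧
    ((IsClassicalUpset F ∧ IsNFilter n F) ↔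
      ∃ (B : Type u) (_ : BooleanAlgebra B) (h : L → B) (G : Set B),
        Function.Surjective h ∧
        (∀ x y : L, h (x ⊓ y) = h x ⊓ h y) ∧
        (∀ x y : L, h (x ⊔ y) = h x ⊔ h y) ∧
        (∀ x : L, h (∼x) = (h x)ᶜ) ∧
        IsUpset G ∧ G.Nonempty ∧ G ≠ Set.univ ∧ IsNFilter n G ∧ F = h ⁻¹' G) := by
  have quotient_data : IsUpset F → IsClassicalUpset F → ∃ _ : Nonempty L,
      IsUpset (mk '' F) ∧ (mk '' F).Nonempty ∧ mk '' F ≠ Set.univ ∧ F = mk ⁻¹' (mk '' F) := by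
    intro hup hF
    have hFG := (preimage_image_mk hup hF).symm
    refine ⟨hF.1.2.to_subtype.map Subtype.val, isUpset_image_mk hup hF, hF.1.2.image mk,
      fun hG => hF.2.2 (by rw [hFG, hG, Set.preimage_univ]), hFG⟩
  refine ⟨⟨fun ⟨hup, hF⟩ => ?_, ?_⟩, ⟨fun ⟨hF, hnF⟩ => ?_, ?_⟩⟩
  · obtain ⟨_, hGup, hGne, hGne_univ, hFG⟩ := quotient_data hup hF
    exact ⟨_, inferInstance, mk, mk '' F, mk_surjective, mk_inf, mk_sup, mk_dneg,
      hGup, hGne, hGne_univ, hFG⟩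
  · rintro ⟨B, _, h, G, hsurj, hinf, hsup, hneg, hGup, hGne, hGne_univ, rfl⟩
    exact ⟨hGup.preimage hinf, isClassicalUpset_preimage hsurj hinf hsup hneg hGne hGne_univ⟩
  · obtain ⟨_, hGup, hGne, hGne_univ, hFG⟩ := quotient_data hnF.1 hF
    exact ⟨_, inferInstance, mk, mk '' F, mk_surjective, mk_inf, mk_sup, mk_dneg, hGup, hGne,
      hGne_univ, (hFG ▸ hnF).of_preimage mk_surjective mk_inf hGup, hFG⟩
  · rintro ⟨B, _, h, G, hsurj, hinf, hsup, hneg, -, hGne, hGne_univ, hGn, rfl⟩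
    exact ⟨isClassicalUpset_preimage hsurj hinf hsup hneg hGne hGne_univ, hGn.preimage hinf⟩

/-- classical upsets (resp. classical `n`-filters) of a De Morgan lattice are
precisely the preimages of nonempty proper upsets (resp. `n`-filters) of Boolean algebras
under surjective lattice homomorphisms commuting with negation/complementation. -/
theorem statement10 {L : Type u} [DeMorgan L] [Nonempty L] (n : ℕ) (hn : 1 ≤ n)
    (F : Set L) :
    ((IsUpset F ∧ IsClassicalUpset F) ↔
      ∃ (B : Type u) (_ : BooleanAlgebra B) (h : L → B) (G : Set B),
        Function.Surjective h ∧
        (∀ x y : L, h (x ⊓ y) = h x ⊓ h y) ∧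
        (∀ x y : L, h (x ⊔ y) = h x ⊔ h y) ∧
        (∀ x : L, h (∼x) = (h x)ᶜ) ∧
        IsUpset G ∧ G.Nonempty ∧ G ≠ Set.univ ∧ F = h ⁻¹' G) ∧
    ((IsClassicalUpset F ∧ IsNFilter n F) ↔
      ∃ (B : Type u) (_ : BooleanAlgebra B) (h : L → B) (G : Set B),
        Function.Surjective h ∧
        (∀ x y : L, h (x ⊓ y) = h x ⊓ h y) ∧
        (∀ x y : L, h (x ⊔ y) = h x ⊔ h y) ∧
        (∀ x : L, h (∼x) = (h x)ᶜ) ∧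
        IsUpset G ∧ G.Nonempty ∧ G ≠ Set.univ ∧ IsNFilter n G ∧ F = h ⁻¹' G) :=
  statement10_general n F
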